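/- arXiv:2405.00270 — 2 statements merged into one kernel-verified Lean document; each statement's English description precedes it below -/
import Mathlib

section
/- Let R be an integral domain and L, L', L'', C, C', C'' nonzero elements of R satisfying (L·L') = (C·C'), (L·L'') = (C·C''), and (L'·L'') = (C'·C'') as ideals. If moreover R is a UFD, then (L) = (C), (L') = (C'), and (L'') = (C''). -/
/-!
Multiplying the first two relations gives `(L² · L'L'') = (C² · C'C'')`, and cancelling the third
leaves `(L²) = (C²)`. In a UFD associated squares have associated roots (compare multiplicities
of primes), so `(L) = (C)`; the other two equalities follow by symmetry.
-/

namespace UniqueFactorizationMonoid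

variable {R : Type*} [CommMonoidWithZero R] [UniqueFactorizationMonoid R]

theorem associated_of_associated_pow {a b : R} {n : ℕ} (hn : n ≠ 0)
    (h : Associated (a ^ n) (b ^ n)) : Associated a b := by
  rw [← dvd_dvd_iff_associated] at h ⊢
  exact ⟨(pow_dvd_pow_iff_dvd hn).1 h.1, (pow_dvd_pow_iff_dvd hn).1 h.2⟩

theorem associated_of_associated_pairwise_mul {a b c x y z : R} (hb : b ≠ 0) (hc : c ≠ 0)
    (hab : Associated (a * b) (x * y)) (hac : Associated (a * c) (x * z))
    (hbc : Associated (b * c) (y * z)) : Associated a x := by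
  have hsq : Associated (a ^ 2 * (b * c)) (x ^ 2 * (y * z)) := by
    rw [sq, sq, mul_mul_mul_comm a, mul_mul_mul_comm x]
    exact hab.mul_mul hac
  exact associated_of_associated_pow two_ne_zero (hsq.of_mul_right hbc (mul_ne_zero hb hc))

end UniqueFactorizationMonoid

theorem separate_factors_of_three_products_general {R : Type*} [CommRing R] [IsDomain R]
    [UniqueFactorizationMonoid R]
    (L L' L'' C C' C'' : R)
    (hL : L ≠ 0) (hL' : L' ≠ 0) (hL'' : L'' ≠ 0)
    (h1 : Ideal.span {L * L'} = Ideal.span {C * C'})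
    (h2 : Ideal.span {L * L''} = Ideal.span {C * C''})
    (h3 : Ideal.span {L' * L''} = Ideal.span {C' * C''}) :
    Ideal.span {L} = Ideal.span {C} ∧ Ideal.span {L'} = Ideal.span {C'} ∧
      Ideal.span {L''} = Ideal.span {C''} := by
  simp only [Ideal.span_singleton_eq_span_singleton] at h1 h2 h3 ⊢
  have h1' : Associated (L' * L) (C' * C) := by rwa [mul_comm L', mul_comm C']
  have h2' : Associated (L'' * L) (C'' * C) := by rwa [mul_comm L'', mul_comm C'']
  have h3' : Associated (L'' * L') (C'' * C') := by rwa [mul_comm L'', mul_comm C'']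
  exact ⟨UniqueFactorizationMonoid.associated_of_associated_pairwise_mul hL' hL'' h1 h2 h3,
    UniqueFactorizationMonoid.associated_of_associated_pairwise_mul hL hL'' h1' h3 h2,
    UniqueFactorizationMonoid.associated_of_associated_pairwise_mul hL hL' h2' h3' h1⟩

/-- In a UFD, if `(L·L') = (C·C')`, `(L·L'') = (C·C'')` and `(L'·L'') = (C'·C'')` as ideals
(all elements nonzero), then `(L) = (C)`, `(L') = (C')` and `(L'') = (C'')`. -/
theorem separate_factors_of_three_products {R : Type*} [CommRing R] [IsDomain R]
    [UniqueFactorizationMonoid R]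
    (L L' L'' C C' C'' : R)
    (hL : L ≠ 0) (hL' : L' ≠ 0) (hL'' : L'' ≠ 0)
    (hC : C ≠ 0) (hC' : C' ≠ 0) (hC'' : C'' ≠ 0)
    (h1 : Ideal.span {L * L'} = Ideal.span {C * C'})
    (h2 : Ideal.span {L * L''} = Ideal.span {C * C''})
    (h3 : Ideal.span {L' * L''} = Ideal.span {C' * C''}) :
    Ideal.span {L} = Ideal.span {C} ∧ Ideal.span {L'} = Ideal.span {C'} ∧
      Ideal.span {L''} = Ideal.span {C''} :=
  separate_factors_of_three_products_general L L' L'' C C' C'' hL hL' hL'' h1 h2 h3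
end

section
/- Let 0 → A → B → C → 0 be a short exact sequence of finitely generated torsion modules over a Noetherian integral domain R, and suppose A, B, C each admit finite free resolutions of length 1 (equivalently, are presented by square matrices with nonzero determinant). Then Fitt⁰_R(B) = Fitt⁰_R(A) · Fitt⁰_R(C). -/
open scoped BigOperators

/-- The zeroth Fitting ideal of a module `M` over a commutative ring `R`: the ideal
generated by determinants of square matrices of relations among a finite generating
family of `M`. -/
def fittZero (R M : Type*) [CommRing R] [AddCommGroup M] [Module R M] : Ideal R :=
  ⨆ (n : ℕ) (v : Fin n → M) (_ : Submodule.span R (Set.range v) = ⊤),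
    Ideal.span {r | ∃ A : Matrix (Fin n) (Fin n) R,
      r = A.det ∧ ∀ i, ∑ j, A i j • v j = 0}

/-- `M` admits a finite free resolution of length 1 by square matrices: it is the
cokernel of an injective endomorphism of a finite free module, equivalently it is
presented by a square matrix with nonzero determinant. -/
def HasSquarePresentation (R M : Type*) [CommRing R] [AddCommGroup M] [Module R M] :
    Prop :=
  ∃ (n : ℕ) (A : Matrix (Fin n) (Fin n) R), A.det ≠ 0 ∧
    Nonempty (((Fin n → R) ⧸ LinearMap.range (Matrix.toLin' A)) ≃ₗ[R] M)

section Rel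
variable (R : Type*) {M : Type*} [CommRing R] [AddCommGroup M] [Module R M]

/-- The ideal of determinants of square relation matrices for a family `v`. -/
def relIdeal {n : ℕ} (v : Fin n → M) : Ideal R :=
  Ideal.span {r | ∃ A : Matrix (Fin n) (Fin n) R,
      r = A.det ∧ ∀ i, ∑ j, A i j • v j = 0}

variable {R}

theorem det_mem_relIdeal {n : ℕ} {v : Fin n → M} (X : Matrix (Fin n) (Fin n) R)
    (hX : ∀ i, ∑ j, X i j • v j = 0) : X.det ∈ relIdeal R v :=
  Ideal.subset_span ⟨X, rfl, hX⟩

theorem relIdeal_comp_le {k l : ℕ} (e : Fin k ≃ Fin l) (v : Fin l → M) :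
    relIdeal R (v ∘ e) ≤ relIdeal R v := by
  rw [relIdeal, Ideal.span_le]
  rintro r ⟨X, rfl, hX⟩
  rw [← Matrix.det_submatrix_equiv_self e.symm X]
  refine det_mem_relIdeal _ fun i => ?_
  have h : ∑ j, X.submatrix e.symm e.symm i j • v j
      = ∑ j, X (e.symm i) j • (v ∘ e) j :=
    (Fintype.sum_equiv e _ _ (fun j => by simp)).symm
  rw [h]
  exact hX _

theorem relIdeal_comp {k l : ℕ} (e : Fin k ≃ Fin l) (v : Fin l → M) :
    relIdeal R (v ∘ e) = relIdeal R v := by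
  refine le_antisymm (relIdeal_comp_le e v) ?_
  have h := relIdeal_comp_le (R := R) e.symm (v ∘ e)
  have : (v ∘ e) ∘ e.symm = v := by funext i; simp
  rwa [this] at h

end Rel

section Snoc
variable {R M : Type*} [CommRing R] [AddCommGroup M] [Module R M]

theorem relIdeal_snoc {n : ℕ} {v : Fin n → M} {x : M}
    (hx : x ∈ Submodule.span R (Set.range v)) :
    relIdeal R (Fin.snoc v x : Fin (n + 1) → M) = relIdeal R v := by
  obtain ⟨c, hc⟩ := (Submodule.mem_span_range_iff_exists_fun R).mp hx
  have e := finSumFinEquiv (m := n) (n := 1)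
  apply le_antisymm
  · -- snoc ≤ base : column operations and Laplace expansion
    rw [relIdeal, Ideal.span_le]
    rintro r ⟨Y, rfl, hY⟩
    set c' : Fin (n + 1) → R := Fin.snoc c 0 with hc'
    set F : Matrix (Fin (n + 1)) (Fin (n + 1)) R :=
      Matrix.of fun p q => if p = Fin.last n ∧ q ≠ Fin.last n then c' q else 0 with hF
    have hdetE : (1 + F).det = 1 := by
      rw [Matrix.det_of_lowerTriangular (1 + F) ?ht]
      case ht =>
        intro i j hij
        have hij' : i < j := hij
        simp only [Matrix.add_apply, Matrix.one_apply_ne hij'.ne, hF, Matrix.of_apply]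
        rw [if_neg, add_zero]
        rintro ⟨rfl, -⟩
        exact absurd hij' (not_lt.mpr (Fin.le_last j))
      have : ∀ p : Fin (n + 1), (1 + F) p p = 1 := by
        intro p
        simp [hF, Matrix.one_apply]
      simp [this]
    have hYE : ∀ p q, (Y * (1 + F)) p q
        = Y p q + Y p (Fin.last n) * (if q ≠ Fin.last n then c' q else 0) := by
      intro p q
      rw [Matrix.mul_add, Matrix.mul_one, Matrix.add_apply]
      congr 1
      rw [Matrix.mul_apply]
      rw [Finset.sum_eq_single (Fin.last n)]
      · simp [hF]
      · intro b _ hb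
        simp [hF, hb]
      · simp
    have hdet : Y.det = (Y * (1 + F)).det := by rw [Matrix.det_mul, hdetE, mul_one]
    rw [hdet, Matrix.det_succ_column _ (Fin.last n)]
    refine Ideal.sum_mem _ fun i _ => Ideal.mul_mem_left _ _ ?_
    refine det_mem_relIdeal _ fun a => ?_
    have hrow : ∀ b : Fin n,
        ((Y * (1 + F)).submatrix i.succAbove (Fin.last n).succAbove) a b
          = Y (i.succAbove a) (Fin.castSucc b) + Y (i.succAbove a) (Fin.last n) * c b := by
      intro b
      rw [Matrix.submatrix_apply, Fin.succAbove_last, hYE,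
        if_pos (Fin.castSucc_lt_last b).ne]
      simp [hc']
    calc ∑ b, ((Y * (1 + F)).submatrix i.succAbove (Fin.last n).succAbove) a b • v b
        = ∑ b, (Y (i.succAbove a) (Fin.castSucc b) • v b)
            + Y (i.succAbove a) (Fin.last n) • ∑ b, c b • v b := by
          rw [Finset.smul_sum, ← Finset.sum_add_distrib]
          refine Finset.sum_congr rfl fun b _ => ?_
          rw [hrow b, add_smul, mul_smul]
      _ = ∑ j, Y (i.succAbove a) j • (Fin.snoc v x : Fin (n + 1) → M) j := by
          rw [hc, Fin.sum_univ_castSucc]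
          simp
      _ = 0 := hY _
  · -- base ≤ snoc : border the matrix
    rw [relIdeal, Ideal.span_le]
    rintro r ⟨X, rfl, hX⟩
    set Y₀ : Matrix (Fin n ⊕ Fin 1) (Fin n ⊕ Fin 1) R :=
      Matrix.fromBlocks X 0 (Matrix.of fun _ j => c j) (Matrix.of fun _ _ => (-1 : R))
      with hY₀
    set Y : Matrix (Fin (n + 1)) (Fin (n + 1)) R :=
      Matrix.reindex finSumFinEquiv finSumFinEquiv Y₀ with hY
    have hdet : Y.det = -X.det := by
      rw [hY, Matrix.det_reindex_self, hY₀, Matrix.det_fromBlocks_zero₁₂]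
      simp [Matrix.det_fin_one]
    have hmem : Y.det ∈ relIdeal R (Fin.snoc v x : Fin (n + 1) → M) := by
      refine det_mem_relIdeal _ fun i => ?_
      obtain ⟨i0, rfl⟩ := finSumFinEquiv.surjective i
      have hsum : ∑ j, Y (finSumFinEquiv i0) j • (Fin.snoc v x : Fin (n + 1) → M) j
          = ∑ b, Y₀ i0 (Sum.inl b) • v b + Y₀ i0 (Sum.inr 0) • x := by
        rw [Fin.sum_univ_castSucc]
        congr 1
        · refine Finset.sum_congr rfl fun b _ => ?_
          have h1 : Y (finSumFinEquiv i0) (Fin.castSucc b) = Y₀ i0 (Sum.inl b) := by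
            rw [hY]
            simp only [Matrix.reindex_apply, Matrix.submatrix_apply, Equiv.symm_apply_apply]
            congr 1
            exact finSumFinEquiv_symm_apply_castAdd b
          rw [h1, Fin.snoc_castSucc]
        · have h2 : Y (finSumFinEquiv i0) (Fin.last n) = Y₀ i0 (Sum.inr 0) := by
            rw [hY]
            simp only [Matrix.reindex_apply, Matrix.submatrix_apply, Equiv.symm_apply_apply]
            congr 1
            have : Fin.last n = Fin.natAdd n (0 : Fin 1) := by
              ext; simp
            rw [this, finSumFinEquiv_symm_apply_natAdd]
          rw [h2, Fin.snoc_last]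
      rw [hsum]
      rcases i0 with i' | i'
      · simp only [hY₀, Matrix.fromBlocks_apply₁₁, Matrix.fromBlocks_apply₁₂,
          Matrix.zero_apply, zero_smul, add_zero]
        exact hX i'
      · simp only [hY₀, Matrix.fromBlocks_apply₂₁, Matrix.fromBlocks_apply₂₂,
          Matrix.of_apply, neg_smul, one_smul]
        rw [hc]
        simp
    rw [hdet] at hmem
    simpa using (relIdeal R (Fin.snoc v x : Fin (n + 1) → M)).neg_mem hmem

end Snoc

section Invariance
variable {R M : Type*} [CommRing R] [AddCommGroup M] [Module R M]

theorem span_append_eq_top {n m : ℕ} {v : Fin n → M}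
    (hv : Submodule.span R (Set.range v) = ⊤) (w : Fin m → M) :
    Submodule.span R (Set.range (Fin.append v w)) = ⊤ := by
  rw [eq_top_iff, ← hv]
  refine Submodule.span_mono ?_
  rintro y ⟨i, rfl⟩
  exact ⟨Fin.castAdd m i, Fin.append_left v w i⟩

theorem relIdeal_append {n : ℕ} {v : Fin n → M}
    (hv : Submodule.span R (Set.range v) = ⊤) :
    ∀ (m : ℕ) (w : Fin m → M), relIdeal R (Fin.append v w) = relIdeal R v := by
  intro m
  induction m with
  | zero =>
    intro w
    have : Fin.append v w = v := by
      funext i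
      exact Fin.append_left v w i
    rw [this]
  | succ m ih =>
    intro w
    have hw : w = Fin.snoc (Fin.init w) (w (Fin.last m)) := (Fin.snoc_init_self w).symm
    have : Fin.append v w
        = (Fin.snoc (Fin.append v (Fin.init w)) (w (Fin.last m)) : Fin (n + m + 1) → M) := by
      rw [hw, Fin.append_snoc, ← hw]
    rw [this, relIdeal_snoc, ih]
    rw [span_append_eq_top hv]
    trivial

theorem relIdeal_eq_of_span_top {n m : ℕ} {v : Fin n → M} {w : Fin m → M}
    (hv : Submodule.span R (Set.range v) = ⊤) (hw : Submodule.span R (Set.range w) = ⊤) :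
    relIdeal R v = relIdeal R w := by
  have h1 : relIdeal R (Fin.append v w) = relIdeal R v := relIdeal_append hv m w
  have h2 : relIdeal R (Fin.append w v) = relIdeal R w := relIdeal_append hw n v
  have h3 : Fin.append v w = Fin.append w v ∘ finAddFlip := by
    funext i
    refine Fin.addCases (fun i => ?_) (fun i => ?_) i
    · simp [Fin.append_left, finAddFlip_apply_castAdd, Fin.append_right]
    · simp [Fin.append_right, finAddFlip_apply_natAdd, Fin.append_left]
  rw [← h1, ← h2, h3, relIdeal_comp]

theorem fittZero_eq_relIdeal {n : ℕ} {v : Fin n → M}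
    (hv : Submodule.span R (Set.range v) = ⊤) :
    fittZero R M = relIdeal R v := by
  apply le_antisymm
  · refine iSup_le fun k => iSup_le fun w => iSup_le fun hw => ?_
    exact le_of_eq (relIdeal_eq_of_span_top (R := R) hw hv)
  · exact le_iSup_of_le n (le_iSup_of_le v (le_iSup_of_le hv le_rfl))

end Invariance

section Pres
open Matrix
variable {R M : Type*} [CommRing R] [AddCommGroup M] [Module R M]

theorem relIdeal_eq_span_det {n : ℕ} {v : Fin n → M} (T : Matrix (Fin n) (Fin n) R)
    (hfwd : ∀ r : Fin n → R, (∑ j, r j • v j = 0) → ∃ x, r = T *ᵥ x)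
    (hcol : ∀ k, ∑ j, T j k • v j = 0) :
    relIdeal R v = Ideal.span {T.det} := by
  apply le_antisymm
  · rw [relIdeal, Ideal.span_le]
    rintro r ⟨X, rfl, hX⟩
    choose x hx using fun i => hfwd (X i) (hX i)
    have hXeq : X = Matrix.of x * Tᵀ := by
      ext i j
      rw [Matrix.mul_apply]
      have := congrFun (hx i) j
      rw [this, Matrix.mulVec, dotProduct]
      exact Finset.sum_congr rfl fun k _ => by
        rw [Matrix.transpose_apply, Matrix.of_apply, mul_comm]
    rw [hXeq, Matrix.det_mul, Matrix.det_transpose]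
    exact Ideal.mul_mem_left _ _ (Ideal.subset_span rfl)
  · rw [Ideal.span_le, Set.singleton_subset_iff]
    rw [← Matrix.det_transpose]
    exact det_mem_relIdeal Tᵀ fun i => hcol i

theorem hasSquarePresentation_spec (h : HasSquarePresentation R M) :
    ∃ (n : ℕ) (T : Matrix (Fin n) (Fin n) R) (v : Fin n → M),
      Submodule.span R (Set.range v) = ⊤ ∧
      ∀ r : Fin n → R, (∑ j, r j • v j = 0) ↔ ∃ x, r = T *ᵥ x := by
  obtain ⟨n, T, -, ⟨e⟩⟩ := h
  set φ : (Fin n → R) →ₗ[R] M :=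
    e.toLinearMap ∘ₗ Submodule.mkQ (LinearMap.range (Matrix.toLin' T)) with hφ
  set v : Fin n → M := fun j => φ (Pi.single j 1) with hv
  have key : ∀ r : Fin n → R, φ r = ∑ j, r j • v j := by
    intro r
    have hr : (r : Fin n → R) = ∑ j, r j • (Pi.single j 1 : Fin n → R) := by
      have : ∀ j : Fin n, r j • (Pi.single j 1 : Fin n → R) = Pi.single j (r j) := by
        intro j
        rw [← Pi.single_smul, smul_eq_mul, mul_one]
      rw [funext this, Finset.univ_sum_single]
    conv_lhs => rw [hr]
    rw [map_sum]
    exact Finset.sum_congr rfl fun j _ => by rw [_root_.map_smul]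
  refine ⟨n, T, v, ?_, ?_⟩
  · rw [eq_top_iff]
    rintro y -
    obtain ⟨q, rfl⟩ := e.surjective y
    obtain ⟨r, rfl⟩ := Submodule.mkQ_surjective _ q
    have : e (Submodule.mkQ _ r) = φ r := rfl
    rw [this, key]
    exact Submodule.sum_mem _ fun j _ =>
      Submodule.smul_mem _ _ (Submodule.subset_span ⟨j, rfl⟩)
  · intro r
    rw [← key]
    constructor
    · intro h0
      have : Submodule.mkQ (LinearMap.range (Matrix.toLin' T)) r = 0 := by
        have := h0
        rw [hφ] at this
        simpa using (map_eq_zero_iff _ e.injective).mp this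
      rw [Submodule.mkQ_apply, Submodule.Quotient.mk_eq_zero] at this
      obtain ⟨x, hxr⟩ := this
      exact ⟨x, by rw [← hxr, Matrix.toLin'_apply]⟩
    · rintro ⟨x, rfl⟩
      have : (T *ᵥ x) ∈ LinearMap.range (Matrix.toLin' T) := ⟨x, Matrix.toLin'_apply T x⟩
      have h0 : Submodule.mkQ (LinearMap.range (Matrix.toLin' T)) (T *ᵥ x) = 0 := by
        rw [Submodule.mkQ_apply, Submodule.Quotient.mk_eq_zero]
        exact this
      rw [hφ]
      simpa using congrArg e h0 |>.trans (map_zero e)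

theorem fittZero_eq_span_det {n : ℕ} (T : Matrix (Fin n) (Fin n) R) (v : Fin n → M)
    (hv : Submodule.span R (Set.range v) = ⊤)
    (hrel : ∀ r : Fin n → R, (∑ j, r j • v j = 0) ↔ ∃ x, r = T *ᵥ x) :
    fittZero R M = Ideal.span {T.det} := by
  rw [fittZero_eq_relIdeal hv]
  refine relIdeal_eq_span_det T (fun r h => (hrel r).mp h) ?_
  intro k
  refine (hrel _).mpr ⟨Pi.single k 1, ?_⟩
  funext j
  simp

end Pres


open Matrix

/-- Multiplicativity of zeroth Fitting ideals in short exact sequences of finitely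
generated torsion modules admitting length-1 finite free resolutions, over a Noetherian
integral domain: `Fitt⁰(B) = Fitt⁰(A) · Fitt⁰(C)`. -/
theorem fittZero_mul_of_shortExact (R : Type*) [CommRing R] [IsDomain R]
    [IsNoetherianRing R]
    (A B C : Type*) [AddCommGroup A] [Module R A] [AddCommGroup B] [Module R B]
    [AddCommGroup C] [Module R C]
    [Module.Finite R A] [Module.Finite R B] [Module.Finite R C]
    (hA : Module.IsTorsion R A) (hB : Module.IsTorsion R B) (hC : Module.IsTorsion R C)
    (hA1 : HasSquarePresentation R A) (hB1 : HasSquarePresentation R B)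
    (hC1 : HasSquarePresentation R C)
    (f : A →ₗ[R] B) (g : B →ₗ[R] C)
    (hf : Function.Injective f) (hg : Function.Surjective g)
    (hfg : LinearMap.range f = LinearMap.ker g) :
    fittZero R B = fittZero R A * fittZero R C := by
  obtain ⟨n, P, a, haspan, harel⟩ := hasSquarePresentation_spec hA1
  obtain ⟨m, S, c, hcspan, hcrel⟩ := hasSquarePresentation_spec hC1
  choose cl hcl using fun k => hg (c k)
  set b : Fin (n + m) → B := Fin.append (f ∘ a) cl with hb
  have hgf : ∀ y : A, g (f y) = 0 := fun y => by
    have : f y ∈ LinearMap.ker g := hfg ▸ LinearMap.mem_range_self f y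
    exact this
  -- the lifted relation columns
  have hker : ∀ k : Fin m, (∑ l, S l k • cl l) ∈ LinearMap.range f := by
    intro k
    rw [hfg, LinearMap.mem_ker, map_sum]
    have h1 : ∑ l, S l k • c l = 0 := by
      refine (hcrel _).mpr ⟨Pi.single k 1, ?_⟩
      funext l; simp
    calc ∑ l, g (S l k • cl l) = ∑ l, S l k • c l :=
          Finset.sum_congr rfl fun l _ => by rw [_root_.map_smul, hcl]
      _ = 0 := h1
  choose z hz using hker
  have hzq : ∀ k, ∃ q : Fin n → R, ∑ j, q j • a j = z k := fun k =>
    (Submodule.mem_span_range_iff_exists_fun R).mp (haspan ▸ Submodule.mem_top)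
  choose q hq using hzq
  set e := finSumFinEquiv (m := n) (n := m) with he
  set T₀ : Matrix (Fin n ⊕ Fin m) (Fin n ⊕ Fin m) R :=
    Matrix.fromBlocks P (Matrix.of q)ᵀ 0 (-S) with hT₀
  set T : Matrix (Fin (n + m)) (Fin (n + m)) R := Matrix.reindex e e T₀ with hT
  -- b generates B
  have hbspan : Submodule.span R (Set.range b) = ⊤ := by
    rw [eq_top_iff]
    rintro y -
    obtain ⟨t, ht⟩ := (Submodule.mem_span_range_iff_exists_fun R).mp
      (show g y ∈ Submodule.span R (Set.range c) from hcspan ▸ Submodule.mem_top)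
    have h1 : (y - ∑ k, t k • cl k) ∈ LinearMap.range f := by
      rw [hfg, LinearMap.mem_ker, map_sub, map_sum]
      have : ∑ k, g (t k • cl k) = g y := by
        rw [← ht]
        exact Finset.sum_congr rfl fun k _ => by rw [_root_.map_smul, hcl]
      rw [this, sub_self]
    obtain ⟨zz, hzz⟩ := h1
    obtain ⟨s, hs⟩ := (Submodule.mem_span_range_iff_exists_fun R).mp
      (show zz ∈ Submodule.span R (Set.range a) from haspan ▸ Submodule.mem_top)
    have hy : y = ∑ j, s j • f (a j) + ∑ k, t k • cl k := by
      have : f zz = y - ∑ k, t k • cl k := hzz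
      have h2 : ∑ j, s j • f (a j) = f zz := by
        rw [← hs, map_sum]
        exact Finset.sum_congr rfl fun j _ => by rw [_root_.map_smul]
      rw [h2, this, sub_add_cancel]
    rw [hy]
    refine Submodule.add_mem _ (Submodule.sum_mem _ fun j _ => ?_)
      (Submodule.sum_mem _ fun k _ => ?_)
    · exact Submodule.smul_mem _ _
        (Submodule.subset_span ⟨Fin.castAdd m j, Fin.append_left (f ∘ a) cl j⟩)
    · exact Submodule.smul_mem _ _
        (Submodule.subset_span ⟨Fin.natAdd n k, Fin.append_right (f ∘ a) cl k⟩)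
  -- splitting sums over Fin (n + m)
  have hsplit : ∀ r : Fin (n + m) → R, ∑ i, r i • b i
      = ∑ j, r (Fin.castAdd m j) • f (a j) + ∑ k, r (Fin.natAdd n k) • cl k := by
    intro r
    rw [Fin.sum_univ_add]
    congr 1
    · exact Finset.sum_congr rfl fun j _ => by rw [hb, Fin.append_left]; rfl
    · exact Finset.sum_congr rfl fun k _ => by rw [hb, Fin.append_right]
  -- every relation of b comes from T
  have hfwd : ∀ r : Fin (n + m) → R, (∑ i, r i • b i = 0) → ∃ x, r = T *ᵥ x := by
    intro r h0
    rw [hsplit] at h0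
    set r₁ : Fin n → R := fun j => r (Fin.castAdd m j) with hr₁
    set r₂ : Fin m → R := fun k => r (Fin.natAdd n k) with hr₂
    have hgc : ∑ k, r₂ k • c k = 0 := by
      have := congrArg g h0
      rw [map_add, map_sum, map_sum, map_zero] at this
      have e1 : ∑ j, g (r₁ j • f (a j)) = 0 := by
        refine Finset.sum_eq_zero fun j _ => ?_
        rw [_root_.map_smul, hgf, smul_zero]
      have e2 : ∑ k, g (r₂ k • cl k) = ∑ k, r₂ k • c k :=
        Finset.sum_congr rfl fun k _ => by rw [_root_.map_smul, hcl]
      rw [e1, e2, zero_add] at this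
      exact this
    obtain ⟨t, ht⟩ := (hcrel _).mp hgc
    -- rewrite the cl-part
    have hclpart : ∑ k, r₂ k • cl k = f (∑ l, t l • z l) := by
      calc ∑ k, r₂ k • cl k = ∑ k, ∑ l, (S k l * t l) • cl k := by
            refine Finset.sum_congr rfl fun k _ => ?_
            rw [show r₂ k = (S *ᵥ t) k from congrFun ht k, Matrix.mulVec, dotProduct,
              Finset.sum_smul]
        _ = ∑ l, t l • ∑ k, S k l • cl k := by
            rw [Finset.sum_comm]
            refine Finset.sum_congr rfl fun l _ => ?_
            rw [Finset.smul_sum]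
            exact Finset.sum_congr rfl fun k _ => by rw [smul_smul, mul_comm]
        _ = ∑ l, t l • f (z l) := Finset.sum_congr rfl fun l _ => by rw [hz]
        _ = f (∑ l, t l • z l) := by
            rw [map_sum]
            exact Finset.sum_congr rfl fun l _ => by rw [_root_.map_smul]
    set u : Fin n → R := fun j => ∑ l, t l * q l j with hu
    have hzu : ∑ l, t l • z l = ∑ j, u j • a j := by
      calc ∑ l, t l • z l = ∑ l, ∑ j, (t l * q l j) • a j := by
            refine Finset.sum_congr rfl fun l _ => ?_
            rw [← hq, Finset.smul_sum]
            exact Finset.sum_congr rfl fun j _ => by rw [smul_smul]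
        _ = ∑ j, u j • a j := by
            rw [Finset.sum_comm]
            exact Finset.sum_congr rfl fun j _ => by rw [hu, Finset.sum_smul]
    have hfa : f (∑ j, (r₁ j + u j) • a j) = 0 := by
      have : ∑ j, r₁ j • f (a j) = f (∑ j, r₁ j • a j) := by
        rw [map_sum]; exact Finset.sum_congr rfl fun j _ => by rw [_root_.map_smul]
      rw [map_sum]
      calc ∑ j, f ((r₁ j + u j) • a j) = ∑ j, (r₁ j • f (a j) + u j • f (a j)) := by
            refine Finset.sum_congr rfl fun j _ => ?_
            rw [add_smul, map_add, _root_.map_smul, _root_.map_smul]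
        _ = ∑ j, r₁ j • f (a j) + ∑ j, u j • f (a j) := Finset.sum_add_distrib
        _ = ∑ j, r₁ j • f (a j) + f (∑ j, u j • a j) := by
            congr 1
            rw [map_sum]
            exact Finset.sum_congr rfl fun j _ => by rw [_root_.map_smul]
        _ = ∑ j, r₁ j • f (a j) + ∑ k, r₂ k • cl k := by rw [← hzu, ← hclpart]
        _ = 0 := h0
    have ha0 : ∑ j, (r₁ j + u j) • a j = 0 := by
      apply hf
      rw [hfa, map_zero]
    obtain ⟨s, hs⟩ := (harel _).mp ha0
    refine ⟨Sum.elim s (-t) ∘ e.symm, ?_⟩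
    have key : ∀ i0 : Fin n ⊕ Fin m, r (e i0) = (T *ᵥ (Sum.elim s (-t) ∘ e.symm)) (e i0) := by
      have hTmv : T *ᵥ (Sum.elim s (-t) ∘ e.symm)
          = (T₀ *ᵥ ((Sum.elim s (-t) ∘ e.symm) ∘ e)) ∘ e.symm := by
        rw [hT, Matrix.reindex_apply, Matrix.submatrix_mulVec_equiv, Equiv.symm_symm]
      have hcomp : (Sum.elim s (-t) ∘ e.symm) ∘ e = Sum.elim s (-t) := by
        funext i0; simp
      intro i0
      rw [hTmv, hcomp, Function.comp_apply, Equiv.symm_apply_apply,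
        Matrix.fromBlocks_mulVec]
      rcases i0 with j | k
      · have h1 : r (e (Sum.inl j)) = r₁ j := by rw [he, finSumFinEquiv_apply_left]
        have h2 : ((Matrix.of q)ᵀ *ᵥ (-t)) j = -u j := by
          rw [Matrix.mulVec, dotProduct, hu, ← Finset.sum_neg_distrib]
          exact Finset.sum_congr rfl fun l _ => by
            rw [Matrix.transpose_apply, Matrix.of_apply, Pi.neg_apply]; ring
        rw [h1]
        show r₁ j = (P *ᵥ s + (Matrix.of q)ᵀ *ᵥ (-t)) j
        rw [Pi.add_apply, h2, ← congrFun hs j]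
        simp
      · have h1 : r (e (Sum.inr k)) = r₂ k := by rw [he, finSumFinEquiv_apply_right]
        rw [h1]
        show r₂ k = ((0 : Matrix (Fin m) (Fin n) R) *ᵥ s + (-S) *ᵥ (-t)) k
        rw [Pi.add_apply, Matrix.zero_mulVec, Matrix.neg_mulVec, Matrix.mulVec_neg]
        rw [show r₂ k = (S *ᵥ t) k from congrFun ht k]
        simp
    funext i
    have := key (e.symm i)
    rwa [Equiv.apply_symm_apply] at this
  -- the columns of T are relations of b
  have hcol : ∀ k, ∑ j, T j k • b j = 0 := by
    intro k
    have hsum : ∑ j, T j k • b j = ∑ j0 : Fin n ⊕ Fin m, T₀ j0 (e.symm k) • b (e j0) := by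
      refine (Fintype.sum_equiv e _ _ fun j0 => ?_).symm
      rw [hT]
      simp
    rw [hsum, Fintype.sum_sum_type]
    have hb1 : ∀ j : Fin n, b (e (Sum.inl j)) = f (a j) := by
      intro j
      rw [he, finSumFinEquiv_apply_left, hb, Fin.append_left]; rfl
    have hb2 : ∀ l : Fin m, b (e (Sum.inr l)) = cl l := by
      intro l
      rw [he, finSumFinEquiv_apply_right, hb, Fin.append_right]
    rcases hk : e.symm k with j' | k'
    · have h1 : ∑ j : Fin n, T₀ (Sum.inl j) (Sum.inl j') • b (e (Sum.inl j))
          = f (∑ j, P j j' • a j) := by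
        rw [map_sum]
        refine Finset.sum_congr rfl fun j _ => ?_
        rw [hb1, hT₀, Matrix.fromBlocks_apply₁₁, _root_.map_smul]
      have h2 : ∑ j, P j j' • a j = 0 := by
        refine (harel _).mpr ⟨Pi.single j' 1, ?_⟩
        funext j; simp
      rw [h1, h2, map_zero]
      rw [Finset.sum_eq_zero, add_zero]
      intro l _
      rw [hT₀, Matrix.fromBlocks_apply₂₁, Matrix.zero_apply, zero_smul]
    · have h1 : ∑ j : Fin n, T₀ (Sum.inl j) (Sum.inr k') • b (e (Sum.inl j))
          = f (z k') := by
        rw [← hq k', map_sum]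
        refine Finset.sum_congr rfl fun j _ => ?_
        rw [hb1, hT₀, Matrix.fromBlocks_apply₁₂, _root_.map_smul]
        rfl
      have h2 : ∑ l : Fin m, T₀ (Sum.inr l) (Sum.inr k') • b (e (Sum.inr l))
          = -f (z k') := by
        rw [hz, ← Finset.sum_neg_distrib]
        refine Finset.sum_congr rfl fun l _ => ?_
        rw [hb2, hT₀, Matrix.fromBlocks_apply₂₂, Matrix.neg_apply, neg_smul]
      rw [h1, h2, add_neg_cancel]
  -- conclude
  have hBval : fittZero R B = Ideal.span {T.det} := by
    rw [fittZero_eq_relIdeal hbspan]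
    exact relIdeal_eq_span_det T hfwd hcol
  have hAval : fittZero R A = Ideal.span {P.det} := fittZero_eq_span_det P a haspan harel
  have hCval : fittZero R C = Ideal.span {S.det} := fittZero_eq_span_det S c hcspan hcrel
  have hTdet : T.det = P.det * ((-1 : R) ^ m * S.det) := by
    rw [hT, Matrix.det_reindex_self, hT₀, Matrix.det_fromBlocks_zero₂₁, Matrix.det_neg,
      Fintype.card_fin]
  rw [hBval, hAval, hCval, hTdet, Ideal.span_singleton_mul_span_singleton]
  rcases neg_one_pow_eq_or R m with h | h
  · rw [h, one_mul]
  · rw [h, show P.det * (-1 * S.det) = -(P.det * S.det) by ring, Ideal.span_singleton_neg]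
end
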